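/- arXiv:math/0012194 — 2 statements merged into one kernel-verified Lean document; each statement's English description precedes it below -/
import Mathlib

section
/- Fix an integer k ≥ 1, set p = k + 2, and let G = (ZMod 2)^k with S_k acting by permuting coordinates. Let a, b, c ∈ G have exactly α₁, β₁, γ₁ coordinates equal to 1, respectively. Then M([a],[b],[c]) = 1 if the triple (α₁+1, β₁+1, γ₁+1) is p-admissible, and M([a],[b],[c]) = 0 otherwise. (Equivalently, M([a],[b],[c]) equals the level-k fusion coefficient of the affine Lie algebra A₁⁽¹⁾ for the modules labelled by spins α₁/2, β₁/2, γ₁/2.) -/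
/-- The orbit of `a` under the symmetric group `S_k` permuting the `k` coordinates. -/
def permOrbit {N k : ℕ} (a : Fin k → ZMod N) : Set (Fin k → ZMod N) :=
  {x | ∃ σ : Equiv.Perm (Fin k), x = fun i => a (σ i)}

/-- `T([a],[b],[c]) = {(x,y,z) ∈ [a]×[b]×[c] : x + y + z = 0}`. -/
def TripleSet (N k : ℕ) (a b c : Fin k → ZMod N) : Type :=
  {t : (Fin k → ZMod N) × (Fin k → ZMod N) × (Fin k → ZMod N) //
    t.1 ∈ permOrbit a ∧ t.2.1 ∈ permOrbit b ∧ t.2.2 ∈ permOrbit c ∧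
    t.1 + t.2.1 + t.2.2 = 0}

/-- `M([a],[b],[c])`: the number of orbits of the diagonal action of `S_k` on
`T([a],[b],[c])`, computed as the cardinality of the quotient by the orbit relation. -/
noncomputable def Morbits (N k : ℕ) (a b c : Fin k → ZMod N) : ℕ :=
  Nat.card (Quot fun t t' : TripleSet N k a b c =>
    ∃ σ : Equiv.Perm (Fin k),
      (∀ i, t'.1.1 i = t.1.1 (σ i)) ∧ (∀ i, t'.1.2.1 i = t.1.2.1 (σ i)) ∧
      (∀ i, t'.1.2.2 i = t.1.2.2 (σ i)))

/-- The number of coordinates of `a` equal to `j`. -/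
def cnt {N k : ℕ} (a : Fin k → ZMod N) (j : ZMod N) : ℕ :=
  (Finset.univ.filter fun i => a i = j).card

/-- For an integer `p ≥ 2`, a triple of integers `(m, m', m'')` is `p`-admissible when
`0 < m, m', m'' < p`, the sum `m + m' + m'' < 2p` is odd, and the strict triangle
inequalities hold. -/
def PAdmissible (p m m' m'' : ℤ) : Prop :=
  (0 < m ∧ m < p) ∧ (0 < m' ∧ m' < p) ∧ (0 < m'' ∧ m'' < p) ∧
  m + m' + m'' < 2 * p ∧ Odd (m + m' + m'') ∧
  m < m' + m'' ∧ m' < m + m'' ∧ m'' < m + m'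

open Finset

section auxlemmas
variable {k : ℕ} {V : Type*} [DecidableEq V]

lemma cnt_comp_perm (g : Fin k → V) (σ : Equiv.Perm (Fin k)) (v : V) :
    (univ.filter fun i => g (σ i) = v).card = (univ.filter fun i => g i = v).card := by
  apply Finset.card_bij (fun i _ => σ i)
  · intro i hi; simp_all
  · intro i _ j _ h; exact σ.injective h
  · intro j hj; exact ⟨σ.symm j, by simp_all, by simp⟩

lemma exists_perm_iff (f g : Fin k → V) :
    (∃ σ : Equiv.Perm (Fin k), f = fun i => g (σ i)) ↔
      ∀ v, (univ.filter fun i => f i = v).card = (univ.filter fun i => g i = v).card := by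
  constructor
  · rintro ⟨σ, rfl⟩ v; exact cnt_comp_perm g σ v
  · intro h
    have hcard : ∀ v : V, Fintype.card {i // g i = v} = Fintype.card {i // f i = v} := by
      intro v; rw [Fintype.card_subtype, Fintype.card_subtype]; exact (h v).symm
    have e : ∀ v, {i // f i = v} ≃ {i // g i = v} :=
      fun v => (Fintype.equivOfCardEq (hcard v)).symm
    set τ : Fin k → Fin k := fun i => (e (f i) ⟨i, rfl⟩ : {j // g j = f i}).1 with hτ
    have hg : ∀ i, g (τ i) = f i := fun i => (e (f i) ⟨i, rfl⟩).2
    have hτ' : ∀ (j : Fin k) (v : V) (hv : f j = v), τ j = (e v ⟨j, hv⟩).1 := by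
      intro j v hv; subst hv; rfl
    have hinj : Function.Injective τ := by
      intro i i' hii
      have hf : f i' = f i := by rw [← hg i, ← hg i', hii]
      rw [hτ' i (f i) rfl, hτ' i' (f i) hf] at hii
      have := (e (f i)).injective (Subtype.ext hii)
      exact congrArg Subtype.val this
    refine ⟨Equiv.ofBijective τ
      ((Fintype.bijective_iff_injective_and_card τ).mpr ⟨hinj, rfl⟩), ?_⟩
    funext i
    exact (hg i).symm

end auxlemmas

lemma cnt_zero_eq {k : ℕ} (x : Fin k → ZMod 2) :
    (univ.filter fun i => x i = 0).card = k - (univ.filter fun i => x i = 1).card := by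
  have h := Finset.card_filter_add_card_filter_not
    (s := (univ : Finset (Fin k))) (p := fun i => x i = 1)
  have h2 : (univ.filter fun i => ¬ x i = 1) = (univ.filter fun i => x i = 0) := by
    apply Finset.filter_congr; intro i _
    generalize x i = v; revert v; decide
  rw [h2] at h
  have h3 : (univ : Finset (Fin k)).card = k := by simp
  omega

lemma zmod2_em (v : ZMod 2) : v = 0 ∨ v = 1 := by revert v; decide

lemma mem_permOrbit_iff {k : ℕ} (x a : Fin k → ZMod 2) :
    x ∈ permOrbit a ↔ cnt x 1 = cnt a 1 := by
  show (∃ σ : Equiv.Perm (Fin k), x = fun i => a (σ i)) ↔ _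
  rw [exists_perm_iff]
  constructor
  · intro h; exact h 1
  · intro h v
    rcases zmod2_em v with rfl | rfl
    · rw [cnt_zero_eq, cnt_zero_eq]; unfold cnt at h; rw [h]
    · exact h

lemma z_eq_add {k : ℕ} {x y z : Fin k → ZMod 2} (hs : x + y + z = 0) (i : Fin k) :
    z i = x i + y i := by
  have h := congrFun hs i
  simp only [Pi.add_apply, Pi.zero_apply] at h
  revert h
  generalize x i = u; generalize y i = v; generalize z i = w
  revert u v w; decide

lemma cntf {k : ℕ} {x y z : Fin k → ZMod 2} (hs : x + y + z = 0) (u v w : ZMod 2) :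
    (univ.filter fun i => (x i, y i, z i) = (u, v, w)).card =
      if u + v = w then (univ.filter fun i => x i = u ∧ y i = v).card else 0 := by
  split
  · next h =>
    congr 1
    apply Finset.filter_congr
    intro i _
    constructor
    · intro hh
      simp only [Prod.mk.injEq] at hh
      exact ⟨hh.1, hh.2.1⟩
    · intro hh
      have := z_eq_add hs i
      simp only [Prod.mk.injEq]
      exact ⟨hh.1, hh.2, by rw [this, hh.1, hh.2, h]⟩
  · next h =>
    rw [Finset.card_eq_zero, Finset.filter_eq_empty_iff]
    intro i _
    intro hh
    simp only [Prod.mk.injEq] at hh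
    exact h (by rw [← hh.1, ← hh.2.1, ← hh.2.2]; exact (z_eq_add hs i).symm)

lemma m_vals {k : ℕ} {x y z : Fin k → ZMod 2} (hs : x + y + z = 0) :
    (univ.filter fun i => x i = 1 ∧ y i = 1).card
        + (univ.filter fun i => x i = 1 ∧ y i = 0).card = (univ.filter fun i => x i = 1).card ∧
    (univ.filter fun i => x i = 1 ∧ y i = 1).card
        + (univ.filter fun i => x i = 0 ∧ y i = 1).card = (univ.filter fun i => y i = 1).card ∧
    (univ.filter fun i => x i = 1 ∧ y i = 0).card
        + (univ.filter fun i => x i = 0 ∧ y i = 1).card = (univ.filter fun i => z i = 1).card ∧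
    (univ.filter fun i => x i = 1 ∧ y i = 1).card
        + (univ.filter fun i => x i = 1 ∧ y i = 0).card
        + (univ.filter fun i => x i = 0 ∧ y i = 1).card
        + (univ.filter fun i => x i = 0 ∧ y i = 0).card = k := by
  have key : ∀ (p : Fin k → Prop) [DecidablePred p],
      (univ.filter fun i => p i ∧ y i = 1).card + (univ.filter fun i => p i ∧ y i = 0).card
        = (univ.filter p).card := by
    intro p _
    have h := Finset.card_filter_add_card_filter_not
      (s := univ.filter p) (p := fun i => y i = 1)
    rw [Finset.filter_filter, Finset.filter_filter] at h
    have h2 : (univ.filter fun i => p i ∧ ¬ y i = 1) = (univ.filter fun i => p i ∧ y i = 0) := by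
      apply Finset.filter_congr; intro i _
      constructor
      · rintro ⟨h1, h2⟩; exact ⟨h1, by revert h2; generalize y i = v; revert v; decide⟩
      · rintro ⟨h1, h2⟩; exact ⟨h1, by rw [h2]; decide⟩
    rw [h2] at h
    exact h
  have keyx : ∀ (p : Fin k → Prop) [DecidablePred p],
      (univ.filter fun i => x i = 1 ∧ p i).card + (univ.filter fun i => x i = 0 ∧ p i).card
        = (univ.filter p).card := by
    intro p _
    have h := Finset.card_filter_add_card_filter_not
      (s := univ.filter p) (p := fun i => x i = 1)
    rw [Finset.filter_filter, Finset.filter_filter] at h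
    have h2 : (univ.filter fun i => p i ∧ ¬ x i = 1) = (univ.filter fun i => x i = 0 ∧ p i) := by
      apply Finset.filter_congr; intro i _
      constructor
      · rintro ⟨h1, h2⟩; exact ⟨by revert h2; generalize x i = v; revert v; decide, h1⟩
      · rintro ⟨h1, h2⟩; exact ⟨h2, by rw [h1]; decide⟩
    have h3 : (univ.filter fun i => p i ∧ x i = 1) = (univ.filter fun i => x i = 1 ∧ p i) := by
      apply Finset.filter_congr; intro i _; exact and_comm
    rw [h2, h3] at h
    exact h
  refine ⟨key _, keyx _, ?_, ?_⟩
  · have h1 : (univ.filter fun i => z i = 1) =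
        (univ.filter fun i => (x i = 1 ∧ y i = 0) ∨ (x i = 0 ∧ y i = 1)) := by
      apply Finset.filter_congr; intro i _
      rw [z_eq_add hs i]
      generalize x i = u; generalize y i = v
      revert u v; decide
    rw [h1, Finset.filter_or, Finset.card_union_of_disjoint]
    rw [Finset.disjoint_left]
    intro i hi hi'
    simp only [Finset.mem_filter] at hi hi'
    rw [hi.2.1] at hi'
    exact absurd hi'.2.1 (by decide)
  · have h := Finset.card_filter_add_card_filter_not
      (s := (univ : Finset (Fin k))) (p := fun i => x i = 1)
    have h2 : (univ.filter fun i => ¬ x i = 1) = (univ.filter fun i => x i = 0) := by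
      apply Finset.filter_congr; intro i _
      generalize x i = v; revert v; decide
    rw [h2] at h
    have h3 : (univ : Finset (Fin k)).card = k := by simp
    have h4 := key (fun i => x i = 1)
    have h5 := key (fun i => x i = 0)
    omega

lemma card_filter_Ico (k lo hi : ℕ) (h : hi ≤ k) :
    (univ.filter fun i : Fin k => lo ≤ i.1 ∧ i.1 < hi).card = hi - lo := by
  rw [← Nat.card_Ico lo hi]
  apply Finset.card_bij' (fun i _ => i.1)
    (fun n hn => ⟨n, lt_of_lt_of_le (Finset.mem_Ico.mp hn).2 h⟩)
  · intro i hi; rfl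
  · intro n hn; rfl
  · intro i hi; simp only [Finset.mem_filter] at hi; exact Finset.mem_Ico.mpr hi.2
  · intro n hn; simp [Finset.mem_Ico.mp hn]

lemma card_filter_lt (k hi : ℕ) (h : hi ≤ k) :
    (univ.filter fun i : Fin k => i.1 < hi).card = hi := by
  have := card_filter_Ico k 0 hi h
  simp only [Nat.zero_le, true_and, Nat.sub_zero] at this
  exact this

lemma exists_triple (k α β γ : ℕ) (hpar : (α + β + γ) % 2 = 0)
    (h1 : α ≤ β + γ) (h2 : β ≤ α + γ) (h3 : γ ≤ α + β) (h4 : α + β + γ ≤ 2 * k) :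
    ∃ x y z : Fin k → ZMod 2, x + y + z = 0 ∧
      (univ.filter fun i => x i = 1).card = α ∧
      (univ.filter fun i => y i = 1).card = β ∧
      (univ.filter fun i => z i = 1).card = γ := by
  set s := (α + β + γ) / 2 with hsdef
  have hs1 : α ≤ s := by omega
  have hs2 : s ≤ k := by omega
  have hs3 : s - α ≤ γ := by omega
  have hs4 : γ ≤ s := by omega
  refine ⟨fun i => if s - α ≤ i.1 ∧ i.1 < s then 1 else 0,
          fun i => if i.1 < s - α ∨ (γ ≤ i.1 ∧ i.1 < s) then 1 else 0,
          fun i => if i.1 < γ then 1 else 0, ?_, ?_, ?_, ?_⟩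
  · funext i
    simp only [Pi.add_apply, Pi.zero_apply]
    split_ifs <;> first | decide | omega
  · have : (univ.filter fun i : Fin k =>
        (if s - α ≤ i.1 ∧ i.1 < s then (1 : ZMod 2) else 0) = 1)
        = (univ.filter fun i : Fin k => s - α ≤ i.1 ∧ i.1 < s) := by
      apply Finset.filter_congr; intro i _
      split <;> simp_all
    rw [this, card_filter_Ico k _ _ hs2]
    omega
  · have : (univ.filter fun i : Fin k =>
        (if i.1 < s - α ∨ (γ ≤ i.1 ∧ i.1 < s) then (1 : ZMod 2) else 0) = 1)
        = (univ.filter fun i : Fin k => i.1 < s - α ∨ (γ ≤ i.1 ∧ i.1 < s)) := by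
      apply Finset.filter_congr; intro i _
      split <;> simp_all
    rw [this, Finset.filter_or, Finset.card_union_of_disjoint, card_filter_lt k _ (by omega),
      card_filter_Ico k _ _ hs2]
    · omega
    · rw [Finset.disjoint_left]
      intro i hi hi'
      simp only [Finset.mem_filter] at hi hi'
      omega
  · have : (univ.filter fun i : Fin k =>
        (if i.1 < γ then (1 : ZMod 2) else 0) = 1)
        = (univ.filter fun i : Fin k => i.1 < γ) := by
      apply Finset.filter_congr; intro i _
      split <;> simp_all
    rw [this, card_filter_lt k _ (by omega)]

lemma triples_related {k : ℕ} (a b c : Fin k → ZMod 2) (t t' : TripleSet 2 k a b c) :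
    ∃ σ : Equiv.Perm (Fin k),
      (∀ i, t'.1.1 i = t.1.1 (σ i)) ∧ (∀ i, t'.1.2.1 i = t.1.2.1 (σ i)) ∧
      (∀ i, t'.1.2.2 i = t.1.2.2 (σ i)) := by
  have hsum : t.1.1 + t.1.2.1 + t.1.2.2 = 0 := t.2.2.2.2
  have hsum' : t'.1.1 + t'.1.2.1 + t'.1.2.2 = 0 := t'.2.2.2.2
  have hα : cnt t.1.1 1 = cnt t'.1.1 1 := by
    rw [(mem_permOrbit_iff _ a).mp t.2.1, (mem_permOrbit_iff _ a).mp t'.2.1]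
  have hβ : cnt t.1.2.1 1 = cnt t'.1.2.1 1 := by
    rw [(mem_permOrbit_iff _ b).mp t.2.2.1, (mem_permOrbit_iff _ b).mp t'.2.2.1]
  have hγ : cnt t.1.2.2 1 = cnt t'.1.2.2 1 := by
    rw [(mem_permOrbit_iff _ c).mp t.2.2.2.1, (mem_permOrbit_iff _ c).mp t'.2.2.2.1]
  unfold cnt at hα hβ hγ
  obtain ⟨e1, e2, e3, e4⟩ := m_vals hsum
  obtain ⟨e1', e2', e3', e4'⟩ := m_vals hsum'
  have hm11 : (univ.filter fun i => t'.1.1 i = 1 ∧ t'.1.2.1 i = 1).card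
      = (univ.filter fun i => t.1.1 i = 1 ∧ t.1.2.1 i = 1).card := by omega
  have hm10 : (univ.filter fun i => t'.1.1 i = 1 ∧ t'.1.2.1 i = 0).card
      = (univ.filter fun i => t.1.1 i = 1 ∧ t.1.2.1 i = 0).card := by omega
  have hm01 : (univ.filter fun i => t'.1.1 i = 0 ∧ t'.1.2.1 i = 1).card
      = (univ.filter fun i => t.1.1 i = 0 ∧ t.1.2.1 i = 1).card := by omega
  have hm00 : (univ.filter fun i => t'.1.1 i = 0 ∧ t'.1.2.1 i = 0).card
      = (univ.filter fun i => t.1.1 i = 0 ∧ t.1.2.1 i = 0).card := by omega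
  have hcounts : ∀ v : ZMod 2 × ZMod 2 × ZMod 2,
      (univ.filter fun i => (t'.1.1 i, t'.1.2.1 i, t'.1.2.2 i) = v).card =
      (univ.filter fun i => (t.1.1 i, t.1.2.1 i, t.1.2.2 i) = v).card := by
    rintro ⟨u, v, w⟩
    rw [cntf hsum' u v w, cntf hsum u v w]
    split
    · rcases zmod2_em u with rfl | rfl <;> rcases zmod2_em v with rfl | rfl <;> assumption
    · rfl
  have hmain := (exists_perm_iff (fun i => (t'.1.1 i, t'.1.2.1 i, t'.1.2.2 i))
      (fun i => (t.1.1 i, t.1.2.1 i, t.1.2.2 i))).mpr hcounts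
  obtain ⟨σ, hσ⟩ := hmain
  refine ⟨σ, fun i => ?_, fun i => ?_, fun i => ?_⟩
  · exact congrArg (fun p => p.1) (congrFun hσ i)
  · exact congrArg (fun p => p.2.1) (congrFun hσ i)
  · exact congrArg (fun p => p.2.2) (congrFun hσ i)

lemma admissible_of_triple {k : ℕ} (p : ℕ) (hp : p = k + 2) (a b c : Fin k → ZMod 2)
    (α1 β1 γ1 : ℕ) (ha : cnt a 1 = α1) (hb : cnt b 1 = β1) (hc : cnt c 1 = γ1)
    (t : TripleSet 2 k a b c) :
    PAdmissible (p : ℤ) ((α1 : ℤ) + 1) ((β1 : ℤ) + 1) ((γ1 : ℤ) + 1) := by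
  have hsum : t.1.1 + t.1.2.1 + t.1.2.2 = 0 := t.2.2.2.2
  have hα : cnt t.1.1 1 = α1 := by rw [(mem_permOrbit_iff _ a).mp t.2.1, ha]
  have hβ : cnt t.1.2.1 1 = β1 := by rw [(mem_permOrbit_iff _ b).mp t.2.2.1, hb]
  have hγ : cnt t.1.2.2 1 = γ1 := by rw [(mem_permOrbit_iff _ c).mp t.2.2.2.1, hc]
  unfold cnt at hα hβ hγ
  obtain ⟨e1, e2, e3, e4⟩ := m_vals hsum
  rw [hα] at e1; rw [hβ] at e2; rw [hγ] at e3
  subst hp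
  refine ⟨⟨by omega, by omega⟩, ⟨by omega, by omega⟩, ⟨by omega, by omega⟩,
    by omega, ?_, by omega, by omega, by omega⟩
  rw [Int.odd_iff]
  omega

theorem typeA_rank2_orbit_count_eq_fusion (k : ℕ) (hk : 1 ≤ k) (p : ℕ) (hp : p = k + 2)
    (a b c : Fin k → ZMod 2) (α1 β1 γ1 : ℕ)
    (ha : cnt a 1 = α1) (hb : cnt b 1 = β1) (hc : cnt c 1 = γ1) :
    (PAdmissible (p : ℤ) ((α1 : ℤ) + 1) ((β1 : ℤ) + 1) ((γ1 : ℤ) + 1) →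
      Morbits 2 k a b c = 1) ∧
    (¬ PAdmissible (p : ℤ) ((α1 : ℤ) + 1) ((β1 : ℤ) + 1) ((γ1 : ℤ) + 1) →
      Morbits 2 k a b c = 0) := by
  constructor
  · intro hadm
    obtain ⟨⟨ha1, ha2⟩, ⟨hb1, hb2⟩, ⟨hc1, hc2⟩, hlt, hodd, htr1, htr2, htr3⟩ := hadm
    rw [Int.odd_iff] at hodd
    have hpar : (α1 + β1 + γ1) % 2 = 0 := by omega
    have h1 : α1 ≤ β1 + γ1 := by omega
    have h2 : β1 ≤ α1 + γ1 := by omega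
    have h3 : γ1 ≤ α1 + β1 := by omega
    have h4 : α1 + β1 + γ1 ≤ 2 * k := by omega
    obtain ⟨x, y, z, hxyz, hx, hy, hz⟩ := exists_triple k α1 β1 γ1 hpar h1 h2 h3 h4
    have t : TripleSet 2 k a b c := by
      refine ⟨(x, y, z), ?_, ?_, ?_, hxyz⟩
      · exact (mem_permOrbit_iff x a).mpr (by unfold cnt at ha ⊢; rw [hx, ha])
      · exact (mem_permOrbit_iff y b).mpr (by unfold cnt at hb ⊢; rw [hy, hb])
      · exact (mem_permOrbit_iff z c).mpr (by unfold cnt at hc ⊢; rw [hz, hc])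
    unfold Morbits
    haveI : Nonempty (Quot fun t t' : TripleSet 2 k a b c =>
        ∃ σ : Equiv.Perm (Fin k),
          (∀ i, t'.1.1 i = t.1.1 (σ i)) ∧ (∀ i, t'.1.2.1 i = t.1.2.1 (σ i)) ∧
          (∀ i, t'.1.2.2 i = t.1.2.2 (σ i))) := ⟨Quot.mk _ t⟩
    haveI : Subsingleton (Quot fun t t' : TripleSet 2 k a b c =>
        ∃ σ : Equiv.Perm (Fin k),
          (∀ i, t'.1.1 i = t.1.1 (σ i)) ∧ (∀ i, t'.1.2.1 i = t.1.2.1 (σ i)) ∧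
          (∀ i, t'.1.2.2 i = t.1.2.2 (σ i))) := by
      constructor
      intro q q'
      induction q using Quot.ind with
      | _ t1 =>
        induction q' using Quot.ind with
        | _ t2 => exact Quot.sound (triples_related a b c t1 t2)
    rw [Nat.card_eq_one_iff_unique]
    exact ⟨inferInstance, inferInstance⟩
  · intro hnadm
    have hempty : IsEmpty (TripleSet 2 k a b c) :=
      ⟨fun t => hnadm (admissible_of_triple p hp a b c α1 β1 γ1 ha hb hc t)⟩
    unfold Morbits
    haveI : IsEmpty (Quot fun t t' : TripleSet 2 k a b c =>
        ∃ σ : Equiv.Perm (Fin k),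
          (∀ i, t'.1.1 i = t.1.1 (σ i)) ∧ (∀ i, t'.1.2.1 i = t.1.2.1 (σ i)) ∧
          (∀ i, t'.1.2.2 i = t.1.2.2 (σ i))) :=
      ⟨fun q => @Quot.ind _ _ (fun _ => False) (fun t => hempty.false t) q⟩
    exact Nat.card_of_isEmpty
end

section
/- Fix an integer k ≥ 1 and let G = (ZMod 3)^k with S_k acting by permuting coordinates. For every a, b, c ∈ G, the number M([a],[b],[c]) of S_k-orbits on T([a],[b],[c]) = {(x,y,z) ∈ [a]×[b]×[c] : x + y + z = 0} is a triangular number: there exists a nonnegative integer n with M([a],[b],[c]) = n(n+1)/2. -/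
open Finset

section FiberCard

variable {α β : Type*} [Fintype α] [DecidableEq β]

theorem card_fiber_comp_perm (f : α → β) (σ : Equiv.Perm α) (b : β) :
    #{i | f (σ i) = b} = #{i | f i = b} := by
  simp only [← Fintype.card_subtype]
  exact Fintype.card_congr (σ.subtypeEquiv fun _ => Iff.rfl)

theorem exists_perm_comp_eq_of_card_fiber_eq {f g : α → β}
    (h : ∀ b, #{i | f i = b} = #{i | g i = b}) : ∃ σ : Equiv.Perm α, g = f ∘ σ := by
  have e : ∀ b, {i // f i = b} ≃ {i // g i = b} := fun b =>
    Fintype.equivOfCardEq (by simp only [Fintype.card_subtype, h])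
  refine ⟨(Equiv.sigmaFiberEquiv g).symm.trans
    ((Equiv.sigmaCongrRight e).symm.trans (Equiv.sigmaFiberEquiv f)), funext fun i => ?_⟩
  exact ((e (g i)).symm ⟨i, rfl⟩).2.symm

theorem exists_card_fiber_eq [Fintype β] (m : β → ℕ) (hm : ∑ b, m b = Fintype.card α) :
    ∃ f : α → β, ∀ b, #{i | f i = b} = m b := by
  let e : α ≃ Σ b, Fin (m b) := Fintype.equivOfCardEq (by simp [hm])
  refine ⟨fun i => (e i).1, fun b => ?_⟩
  rw [← Fintype.card_subtype, ← Fintype.card_fin (m b)]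
  exact Fintype.card_congr ((e.subtypeEquiv fun _ => Iff.rfl).trans (Equiv.sigmaSubtype b))

theorem sum_card_fiber (f : α → β) [Fintype β] : ∑ b, #{i | f i = b} = Fintype.card α :=
  (card_eq_sum_card_fiberwise (f := f) (s := univ) (t := univ) (by simp)).symm

end FiberCard

theorem card_nat_fun_sum_eq_choose (α : Type*) [Fintype α] [DecidableEq α] (n : ℕ) :
    Nat.card {P : α → ℕ // ∑ i, P i = n} = (Fintype.card α + n - 1).choose n := by
  rw [← Nat.card_congr (Sym.equivNatSumOfFintype α n), Nat.card_eq_fintype_card,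
    Sym.card_sym_eq_choose]

section CountMatrix

variable {N k : ℕ}

def pairCount (x y : Fin k → ZMod N) (u v : ZMod N) : ℕ :=
  #{i | (x i, y i) = (u, v)}

theorem mem_permOrbit_iff_cnt_eq {x a : Fin k → ZMod N} :
    x ∈ permOrbit a ↔ ∀ u, cnt x u = cnt a u := by
  constructor
  · rintro ⟨σ, rfl⟩ u
    exact card_fiber_comp_perm a σ u
  · intro h
    exact exists_perm_comp_eq_of_card_fiber_eq fun u => (h u).symm

theorem pairCount_comp_perm (x y : Fin k → ZMod N) (σ : Equiv.Perm (Fin k)) :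
    pairCount (fun i => x (σ i)) (fun i => y (σ i)) = pairCount x y := by
  funext u v
  exact card_fiber_comp_perm (fun i => (x i, y i)) σ (u, v)

variable [NeZero N]

theorem sum_pairCount_right (x y : Fin k → ZMod N) (u : ZMod N) :
    ∑ v, pairCount x y u v = cnt x u := by
  rw [cnt, card_eq_sum_card_fiberwise (f := y) (t := univ) (by simp)]
  simp only [pairCount, filter_filter, Prod.mk.injEq]

theorem sum_pairCount_left (x y : Fin k → ZMod N) (v : ZMod N) :
    ∑ u, pairCount x y u v = cnt y v := by
  rw [cnt, card_eq_sum_card_fiberwise (f := x) (t := univ) (by simp)]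
  simp only [pairCount, filter_filter, Prod.mk.injEq, and_comm]

theorem sum_pairCount_antidiag (x y : Fin k → ZMod N) (w : ZMod N) :
    ∑ u, pairCount x y u (-u - w) = cnt (-x - y) w := by
  rw [cnt, card_eq_sum_card_fiberwise (f := x) (t := univ) (by simp)]
  simp only [pairCount, filter_filter]
  refine sum_congr rfl fun u _ => congrArg card (filter_congr fun i _ => ?_)
  simp only [Pi.sub_apply, Pi.neg_apply, Prod.mk.injEq]
  constructor
  · rintro ⟨rfl, hy⟩
    exact ⟨by rw [hy]; ring, rfl⟩
  · rintro ⟨hw, rfl⟩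
    exact ⟨rfl, by rw [← hw]; ring⟩

/-- `m u v` plays the role of `pairCount x y u v` for a solution `x + y + z = 0`; the third
marginal is taken along the anti-diagonals `-u - v = w`, since `z = -x - y`. -/
structure IsCountMatrix (a b c : Fin k → ZMod N) (m : ZMod N → ZMod N → ℕ) : Prop where
  sum_row : ∀ u, ∑ v, m u v = cnt a u
  sum_col : ∀ v, ∑ u, m u v = cnt b v
  sum_antidiag : ∀ w, ∑ u, m u (-u - w) = cnt c w

theorem eq_neg_sub_of_add_add_eq_zero {G : Type*} [AddCommGroup G] {x y z : G}
    (h : x + y + z = 0) : z = -x - y := by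
  rw [← sub_eq_zero, ← h]; abel

theorem isCountMatrix_pairCount {a b c : Fin k → ZMod N} (t : TripleSet N k a b c) :
    IsCountMatrix a b c (pairCount t.1.1 t.1.2.1) := by
  obtain ⟨⟨x, y, z⟩, hx, hy, hz, hsum⟩ := t
  rw [mem_permOrbit_iff_cnt_eq] at hx hy hz
  rw [eq_neg_sub_of_add_add_eq_zero hsum] at hz
  exact ⟨fun u => (sum_pairCount_right x y u).trans (hx u),
    fun v => (sum_pairCount_left x y v).trans (hy v),
    fun w => (sum_pairCount_antidiag x y w).trans (hz w)⟩

theorem IsCountMatrix.exists_pairCount_eq {a b c : Fin k → ZMod N}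
    {m : ZMod N → ZMod N → ℕ} (hm : IsCountMatrix a b c m) :
    ∃ t : TripleSet N k a b c, pairCount t.1.1 t.1.2.1 = m := by
  have htotal : ∑ p : ZMod N × ZMod N, m p.1 p.2 = Fintype.card (Fin k) := by
    simp only [Fintype.sum_prod_type, hm.sum_row, cnt, sum_card_fiber]
  obtain ⟨f, hf⟩ := exists_card_fiber_eq _ htotal
  set x : Fin k → ZMod N := fun i => (f i).1
  set y : Fin k → ZMod N := fun i => (f i).2
  have hxy : pairCount x y = m := funext₂ fun u v => hf (u, v)
  refine ⟨⟨(x, y, -x - y), ?_, ?_, ?_, by simp⟩, hxy⟩ <;> rw [mem_permOrbit_iff_cnt_eq]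
  · exact fun u => by rw [← sum_pairCount_right x y, hxy, hm.sum_row]
  · exact fun v => by rw [← sum_pairCount_left x y, hxy, hm.sum_col]
  · exact fun w => by rw [← sum_pairCount_antidiag x y, hxy, hm.sum_antidiag]

theorem morbits_eq_card_isCountMatrix (a b c : Fin k → ZMod N) :
    Morbits N k a b c = Nat.card {m // IsCountMatrix a b c m} := by
  refine Nat.card_eq_of_bijective
    (Quot.lift (fun t => ⟨pairCount t.1.1 t.1.2.1, isCountMatrix_pairCount t⟩) ?_) ⟨?_, ?_⟩
  · rintro t t' ⟨σ, hx, hy, -⟩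
    ext1
    simp only [funext hx, funext hy, pairCount_comp_perm]
  · refine Quot.ind fun t => Quot.ind fun t' h => Quot.sound ?_
    have hcount (p : ZMod N × ZMod N) : pairCount t.1.1 t.1.2.1 p.1 p.2 =
        pairCount t'.1.1 t'.1.2.1 p.1 p.2 :=
      congrFun₂ (congrArg Subtype.val h) p.1 p.2
    obtain ⟨σ, hσ⟩ := exists_perm_comp_eq_of_card_fiber_eq (f := fun i => (t.1.1 i, t.1.2.1 i))
      (g := fun i => (t'.1.1 i, t'.1.2.1 i)) hcount
    have hx i : t'.1.1 i = t.1.1 (σ i) := congrArg Prod.fst (congrFun hσ i)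
    have hy i : t'.1.2.1 i = t.1.2.1 (σ i) := congrArg Prod.snd (congrFun hσ i)
    refine ⟨σ, hx, hy, fun i => ?_⟩
    rw [eq_neg_sub_of_add_add_eq_zero t.2.2.2.2, eq_neg_sub_of_add_add_eq_zero t'.2.2.2.2]
    simp only [Pi.sub_apply, Pi.neg_apply, hx, hy]
  · rintro ⟨m, hm⟩
    obtain ⟨t, rfl⟩ := hm.exists_pairCount_eq
    exact ⟨Quot.mk _ t, rfl⟩

end CountMatrix

section DiagMin

variable {N : ℕ} [NeZero N]

def diagMin (m : ZMod N → ZMod N → ℕ) (d : ZMod N) : ℕ :=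
  univ.inf' univ_nonempty fun j => m (d + j) j

theorem diagMin_sub_le (m : ZMod N → ZMod N → ℕ) (u v : ZMod N) : diagMin m (u - v) ≤ m u v := by
  have h := inf'_le (fun j => m (u - v + j) j) (mem_univ v)
  rwa [sub_add_cancel] at h

theorem exists_diagMin_eq (m : ZMod N → ZMod N → ℕ) (d : ZMod N) :
    ∃ j, diagMin m d = m (d + j) j := by
  obtain ⟨j, -, hj⟩ := exists_mem_eq_inf' univ_nonempty fun j => m (d + j) j
  exact ⟨j, hj⟩

theorem diagMin_eq_add {m m' : ZMod N → ZMod N → ℕ} {α : ZMod N → ℤ}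
    (h : ∀ u v, (m u v : ℤ) = m' u v + α (u - v)) (d : ZMod N) :
    (diagMin m d : ℤ) = diagMin m' d + α d := by
  obtain ⟨j, hj⟩ := exists_diagMin_eq m d
  obtain ⟨j', hj'⟩ := exists_diagMin_eq m' d
  have hle := diagMin_sub_le m (d + j') j'
  have hle' := diagMin_sub_le m' (d + j) j
  have hj₁ := h (d + j) j
  have hj₂ := h (d + j') j'
  simp only [add_sub_cancel_right] at hle hle' hj₁ hj₂
  omega

def replaceDiagMin (m : ZMod N → ZMod N → ℕ) (p : ZMod N → ℕ) : ZMod N → ZMod N → ℕ :=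
  fun u v => m u v - diagMin m (u - v) + p (u - v)

theorem cast_replaceDiagMin (m : ZMod N → ZMod N → ℕ) (p : ZMod N → ℕ) (u v : ZMod N) :
    (replaceDiagMin m p u v : ℤ) = m u v + ((p (u - v) : ℤ) - diagMin m (u - v)) := by
  rw [replaceDiagMin, Nat.cast_add, Nat.cast_sub (diagMin_sub_le m u v)]
  ring

theorem diagMin_replaceDiagMin (m : ZMod N → ZMod N → ℕ) (p : ZMod N → ℕ) :
    diagMin (replaceDiagMin m p) = p := by
  funext d
  have h := diagMin_eq_add (α := fun d => (p d : ℤ) - diagMin m d) (cast_replaceDiagMin m p) d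
  omega

theorem replaceDiagMin_diagMin {m m' : ZMod N → ZMod N → ℕ} {α : ZMod N → ℤ}
    (h : ∀ u v, (m u v : ℤ) = m' u v + α (u - v)) : replaceDiagMin m' (diagMin m) = m := by
  funext u v
  have hmin := diagMin_eq_add h (u - v)
  have hle := diagMin_sub_le m' u v
  have huv := h u v
  rw [replaceDiagMin]
  omega

end DiagMin

theorem ZMod.sum_univ_three {M : Type*} [AddCommMonoid M] (f : ZMod 3 → M) :
    ∑ x, f x = f 0 + f 1 + f 2 :=
  Fin.sum_univ_three f

theorem ZMod.forall_three {P : ZMod 3 → Prop} : (∀ x, P x) ↔ P 0 ∧ P 1 ∧ P 2 := by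
  refine ⟨fun h => ⟨h 0, h 1, h 2⟩, fun ⟨h0, h1, h2⟩ x => ?_⟩
  fin_cases x
  exacts [h0, h1, h2]

section Rank3

variable {k : ℕ} {a b c : Fin k → ZMod 3}

theorem isCountMatrix_three_iff {m : ZMod 3 → ZMod 3 → ℕ} :
    IsCountMatrix a b c m ↔
      (m 0 0 + m 0 1 + m 0 2 = cnt a 0 ∧ m 1 0 + m 1 1 + m 1 2 = cnt a 1 ∧
        m 2 0 + m 2 1 + m 2 2 = cnt a 2) ∧
      (m 0 0 + m 1 0 + m 2 0 = cnt b 0 ∧ m 0 1 + m 1 1 + m 2 1 = cnt b 1 ∧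
        m 0 2 + m 1 2 + m 2 2 = cnt b 2) ∧
      (m 0 0 + m 1 2 + m 2 1 = cnt c 0 ∧ m 0 2 + m 1 1 + m 2 0 = cnt c 1 ∧
        m 0 1 + m 1 0 + m 2 2 = cnt c 2) := by
  constructor
  · rintro ⟨hr, hc, hd⟩
    simp only [ZMod.sum_univ_three] at hr hc hd
    exact ⟨⟨hr 0, hr 1, hr 2⟩, ⟨hc 0, hc 1, hc 2⟩, ⟨hd 0, hd 1, hd 2⟩⟩
  · rintro ⟨hr, hc, hd⟩
    refine ⟨ZMod.forall_three.2 ?_, ZMod.forall_three.2 ?_, ZMod.forall_three.2 ?_⟩ <;>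
      simp only [ZMod.sum_univ_three]
    exacts [hr, hc, hd]

theorem IsCountMatrix.isCountMatrix_iff_exists_eq_add {m₀ : ZMod 3 → ZMod 3 → ℕ}
    (h₀ : IsCountMatrix a b c m₀) (m : ZMod 3 → ZMod 3 → ℕ) :
    IsCountMatrix a b c m ↔
      ∃ α : ZMod 3 → ℤ, ∑ d, α d = 0 ∧ ∀ u v, (m u v : ℤ) = m₀ u v + α (u - v) := by
  rw [isCountMatrix_three_iff] at h₀ ⊢
  obtain ⟨⟨r0, r1, r2⟩, ⟨c0, c1, c2⟩, ⟨d0, d1, d2⟩⟩ := h₀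
  zify at r0 r1 r2 c0 c1 c2 d0 d1 d2
  constructor
  · rintro ⟨⟨r0', r1', r2'⟩, ⟨c0', c1', c2'⟩, ⟨d0', d1', d2'⟩⟩
    zify at r0' r1' r2' c0' c1' c2' d0' d1' d2'
    refine ⟨fun d => m d 0 - m₀ d 0, ?_, ?_⟩
    all_goals simp only [ZMod.sum_univ_three, ZMod.forall_three]
    all_goals reduce_mod_char
    all_goals and_intros <;> linarith
  · rintro ⟨α, hα, h⟩
    simp only [ZMod.sum_univ_three, ZMod.forall_three] at hα h
    reduce_mod_char at h
    obtain ⟨⟨e00, e01, e02⟩, ⟨e10, e11, e12⟩, ⟨e20, e21, e22⟩⟩ := h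
    zify
    and_intros <;> linarith

def IsCountMatrix.equivDiagMin {m₀ : ZMod 3 → ZMod 3 → ℕ} (h₀ : IsCountMatrix a b c m₀) :
    {m // IsCountMatrix a b c m} ≃ {p : ZMod 3 → ℕ // ∑ d, p d = ∑ d, diagMin m₀ d} where
  toFun m := ⟨diagMin m.1, by
    obtain ⟨α, hα, h⟩ := (h₀.isCountMatrix_iff_exists_eq_add m.1).1 m.2
    zify
    simp only [diagMin_eq_add h, sum_add_distrib, hα, add_zero]⟩
  invFun p := ⟨replaceDiagMin m₀ p.1, by
    refine (h₀.isCountMatrix_iff_exists_eq_add _).2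
      ⟨fun d => (p.1 d : ℤ) - diagMin m₀ d, ?_, cast_replaceDiagMin m₀ p.1⟩
    rw [sum_sub_distrib, sub_eq_zero]
    exact_mod_cast p.2⟩
  left_inv m := by
    obtain ⟨α, -, h⟩ := (h₀.isCountMatrix_iff_exists_eq_add m.1).1 m.2
    exact Subtype.ext (replaceDiagMin_diagMin h)
  right_inv p := Subtype.ext (diagMin_replaceDiagMin m₀ p.1)

end Rank3

theorem rank3_orbit_count_is_triangular_general (k : ℕ)
    (a b c : Fin k → ZMod 3) :
    ∃ n : ℕ, Morbits 3 k a b c = n * (n + 1) / 2 := by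
  rw [morbits_eq_card_isCountMatrix]
  obtain _ | ⟨m₀, h₀⟩ := isEmpty_or_nonempty {m // IsCountMatrix a b c m}
  · exact ⟨0, Nat.card_of_isEmpty⟩
  · set S := ∑ d, diagMin m₀ d
    refine ⟨S + 1, ?_⟩
    rw [Nat.card_congr h₀.equivDiagMin, card_nat_fun_sum_eq_choose, ZMod.card,
      show 3 + S - 1 = S + 2 by omega, Nat.choose_symm_add, Nat.choose_two_right, Nat.mul_comm]
    rfl

theorem rank3_orbit_count_is_triangular (k : ℕ) (hk : 1 ≤ k)
    (a b c : Fin k → ZMod 3) :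
    ∃ n : ℕ, Morbits 3 k a b c = n * (n + 1) / 2 :=
  rank3_orbit_count_is_triangular_general k a b c
end
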